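/- For meta-walks s and r in a database D and entities e, f, the number of walks of the concatenated meta-walk s⁻¹·s·r from e to f equals (number of walks of s ending at e, i.e., Σ_g |s(g, e, D)| counted with multiplicity as |s⁻¹·s(e, e, D)|) times |r(e, f, D)|, provided every walk of s⁻¹·s from e returns to e (which holds when the labels of s form a functional chain so that each walk of s⁻¹ from e has a unique continuation back). -/

import Mathlib

universe u v w

/-- A graph database: nodes, edges, a label for every node, and an optional
value for nodes (nodes with a value are "entities"). -/
structure GraphDB (Label : Type u) (Value : Type v) where
  V : Type w
  E : V → V → Prop
  lab : V → Label
  val : V → Option Value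

namespace GraphDB

variable {Label : Type u} {Value : Type v}

/-- A node is an entity iff it carries a value. -/
def isEntity (D : GraphDB Label Value) (x : D.V) : Prop := (D.val x).isSome

/-- Isomorphism of graph databases: a bijection of nodes preserving labels,
values, and edges. -/
def Iso (D D' : GraphDB Label Value) : Prop :=
  ∃ f : D.V ≃ D'.V,
    (∀ x, D'.lab (f x) = D.lab x) ∧
    (∀ x, D'.val (f x) = D.val x) ∧
    ∀ x y, D.E x y ↔ D'.E (f x) (f y)

/-- A (nonempty) walk: consecutive nodes are joined by edges. -/
def IsWalk (D : GraphDB Label Value) : List D.V → Prop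
  | [] => False
  | [_] => True
  | x :: y :: rest => D.E x y ∧ IsWalk D (y :: rest)

/-- The value of a walk: the subsequence of (label, value) pairs of its entity
nodes, in order. -/
def walkValue (D : GraphDB Label Value) (wk : List D.V) : List (Label × Value) :=
  wk.filterMap fun x => (D.val x).map fun a => (D.lab x, a)

/-- A walk is informative iff it has no consecutive forward and backward
traverse from an entity node to a valueless node. -/
def Informative (D : GraphDB Label Value) (wk : List D.V) : Prop :=
  ¬ ∃ (l1 l2 : List D.V) (u x : D.V),
      D.isEntity u ∧ ¬ D.isEntity x ∧ wk = l1 ++ u :: x :: u :: l2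

/-- The walks of meta-walk `p` in `D`: informative walks that start and end
at entities and whose label sequence is `p`. -/
def goodWalksOf (D : GraphDB Label Value) (p : List Label) : Set (List D.V) :=
  { wk | D.IsWalk wk ∧ D.Informative wk ∧
        (∀ x, wk.head? = some x → D.isEntity x) ∧
        (∀ x, wk.getLast? = some x → D.isEntity x) ∧
        wk.map D.lab = p }

/-- Informative walks of meta-walk `p` from `e` to `f` in `D`. -/
def walksBetween (D : GraphDB Label Value) (p : List Label) (e f : D.V) :
    Set (List D.V) :=
  { wk ∈ D.goodWalksOf p | wk.head? = some e ∧ wk.getLast? = some f }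

/-- Plain walks of meta-walk `p` from `e` to `f` in `D`. -/
def plainWalksBetween (D : GraphDB Label Value) (p : List Label) (e f : D.V) :
    Set (List D.V) :=
  { wk | D.IsWalk wk ∧ wk.map D.lab = p ∧ wk.head? = some e ∧ wk.getLast? = some f }

/-- Content equivalence of walks (possibly in different databases): equal
value tuples. -/
def WalkContentEquiv (D1 D2 : GraphDB Label Value)
    (w1 : List D1.V) (w2 : List D2.V) : Prop :=
  D1.walkValue w1 = D2.walkValue w2

/-- Content equivalence of meta-walks: a bijection between the walk sets
preserving walk values. -/
def MWContentEquiv (D1 D2 : GraphDB Label Value) (p1 p2 : List Label) : Prop :=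
  ∃ M : ↥(D1.goodWalksOf p1) ≃ ↥(D2.goodWalksOf p2),
    ∀ wk : ↥(D1.goodWalksOf p1),
      D2.walkValue (M wk : List D2.V) = D1.walkValue (wk : List D1.V)

/-- Consecutive pairs of a list. -/
def pairsOf {α : Type*} (l : List α) : List (α × α) := l.zip l.tail

/-- `w` is a subwalk of `x`: a subsequence all of whose edges occur in `x`. -/
def Subwalk (D : GraphDB Label Value) (wk x : List D.V) : Prop :=
  wk.Sublist x ∧ ∀ pr ∈ pairsOf wk, pr ∈ pairsOf x

/-- First label in the list satisfying the entity-label predicate `EL`. -/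
noncomputable def firstEntityLabel (EL : Label → Prop) (xs : List Label) :
    Option Label :=
  xs.find? fun l => @decide (EL l) (Classical.propDecidable _)

/-- Meta-walk `p'` includes `p` in `D` (relative to the entity-label predicate
`EL`). -/
def Includes [DecidableEq Label] (EL : Label → Prop) (D : GraphDB Label Value)
    (p p' : List Label) : Prop :=
  (∃ M : ↥(D.goodWalksOf p) ≃ ↥(D.goodWalksOf p'),
      ∀ wk : ↥(D.goodWalksOf p),
        D.Subwalk (wk : List D.V) (M wk : List D.V) ∧
        (M wk : List D.V).head? = (wk : List D.V).head? ∧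
        (M wk : List D.V).getLast? = (wk : List D.V).getLast?) ∧
  ∃ l, EL l ∧ p.count l < p'.count l ∧
    ∃ a b, p' = a ++ l :: b ∧
      firstEntityLabel EL a.reverse ≠ some l ∧
      firstEntityLabel EL b ≠ some l

/-- A meta-walk is maximal in the set of databases `L` iff it has a walk in
some database of `L` and is not included in any other meta-walk. -/
def MaximalMW [DecidableEq Label] (EL : Label → Prop)
    (L : Set (GraphDB Label Value)) (p : List Label) : Prop :=
  (∃ D ∈ L, (D.goodWalksOf p).Nonempty) ∧
  ∀ p', p' ≠ p → ∀ D ∈ L, ¬ Includes EL D p p'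

/-- Relationship-reorganizing transformation: a bijection between maximal
meta-walks carrying each maximal meta-walk to a content-equivalent one. -/
def RelReorganizing [DecidableEq Label] (EL : Label → Prop)
    (T : GraphDB Label Value → GraphDB Label Value)
    (L K : Set (GraphDB Label Value)) : Prop :=
  (∀ D ∈ L, T D ∈ K) ∧
  ∃ M : {p : List Label // MaximalMW EL L p} ≃ {p : List Label // MaximalMW EL K p},
    ∀ p : {p : List Label // MaximalMW EL L p}, ∀ D ∈ L,
      MWContentEquiv D (T D) p.1 (M p).1

/-- Entity-preserving correspondence between two databases. -/
def EntityPreserving (D D' : GraphDB Label Value) : Prop :=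
  ∃ M : {x : D.V // D.isEntity x} ≃ {y : D'.V // D'.isEntity y},
    (∀ x, D'.val (M x).1 = D.val x.1) ∧
    ∀ x1 x2, D.lab x1.1 = D.lab x2.1 → D'.lab (M x1).1 = D'.lab (M x2).1

/-- Invertible transformation from `L` to `K` (isomorphic databases being
identified, the inverse recovers the original database). -/
def Invertible (T : GraphDB Label Value → GraphDB Label Value)
    (L K : Set (GraphDB Label Value)) : Prop :=
  (∀ D ∈ L, T D ∈ K) ∧
  ∃ T' : GraphDB Label Value → GraphDB Label Value,
    (∀ D' ∈ K, T' D' ∈ L) ∧ ∀ D ∈ L, T' (T D) = D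

/-- The set of databases `L` satisfies the FD `head p →_p last p`. -/
def SatFD (L : Set (GraphDB Label Value)) (p : List Label) : Prop :=
  ∀ D ∈ L, ∀ e f g : D.V,
    (D.plainWalksBetween p e f).Nonempty →
    (D.plainWalksBetween p e g).Nonempty → f = g

/-- The set of FDs (represented by their meta-walks) satisfied by `L`. -/
def FDset (L : Set (GraphDB Label Value)) : Set (List Label) :=
  { p | 2 ≤ p.length ∧ SatFD L p }

/-- The FD `l → l'` in a single database: every node of label `l` has at most
one neighbor of label `l'`. -/
def FD2 (D : GraphDB Label Value) (l l' : Label) : Prop :=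
  ∀ v u1 u2 : D.V, D.lab v = l → D.E v u1 → D.E v u2 →
    D.lab u1 = l' → D.lab u2 = l' → u1 = u2

/-- The PathSim score of `e` and `f` along meta-walk `p`. -/
noncomputable def pathSim (D : GraphDB Label Value) (p : List Label)
    (e f : D.V) : ℝ :=
  (2 * ((D.walksBetween p e f).ncard : ℝ)) /
    (((D.walksBetween p e e).ncard : ℝ) + ((D.walksBetween p f f).ncard : ℝ))

/-- Entity-rearranging transformation. -/
def EntityRearranging (T : GraphDB Label Value → GraphDB Label Value)
    (L K : Set (GraphDB Label Value)) : Prop :=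
  (∀ D ∈ L, T D ∈ K) ∧
  ∀ D ∈ L, ∃ M : D.V ≃ (T D).V,
    (∀ x, (T D).lab (M x) = D.lab x) ∧
    (∀ x, D.isEntity x → (T D).val (M x) = D.val x) ∧
    (∀ x1 x2 : D.V,
        [D.lab x1, D.lab x2] ∉ FDset L → [D.lab x2, D.lab x1] ∉ FDset L →
        (D.E x1 x2 ↔ (T D).E (M x1) (M x2))) ∧
    ∃ N : ↥(FDset L) ≃ ↥(FDset K),
      ∀ p : ↥(FDset L),
        ((N p : List Label).head? = (p : List Label).head?) ∧
        ((N p : List Label).getLast? = (p : List Label).getLast?) ∧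
        ∀ e f : D.V, D.isEntity e → D.isEntity f →
          (D.plainWalksBetween (p : List Label) e f = ∅ ↔
            (T D).plainWalksBetween (N p : List Label) (M e) (M f) = ∅)

/-
Cut a walk of `s⁻¹ · s · r` at the node where its `r`-part begins: the first piece is a walk of
`s⁻¹ · s` from `e`, hence returns to `e`, and the second is a walk of `r` from `e`. Conversely two
such walks glue at `e`. The cut position is fixed by the length of `s⁻¹ · s`, so cutting and
gluing are inverse bijections between walks of the concatenation and pairs of walks.
-/

lemma isWalk_iff (D : GraphDB Label Value) :
    ∀ wk : List D.V, D.IsWalk wk ↔ wk ≠ [] ∧ wk.IsChain D.E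
  | [] => by simp [IsWalk]
  | [_] => by simp [IsWalk]
  | x :: y :: rest => by
    simp only [IsWalk, isWalk_iff D (y :: rest), List.isChain_cons_cons]
    simp

lemma isWalk_append_cons_iff (D : GraphDB Label Value) (l₁ l₂ : List D.V) (x : D.V) :
    D.IsWalk (l₁ ++ x :: l₂) ↔ D.IsWalk (l₁ ++ [x]) ∧ D.IsWalk (x :: l₂) := by
  rw [isWalk_iff, isWalk_iff, isWalk_iff, List.isChain_split]
  simp

lemma plainWalksBetween_nil (D : GraphDB Label Value) (e f : D.V) :
    D.plainWalksBetween [] e f = ∅ := by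
  ext wk
  simp only [plainWalksBetween, List.map_eq_nil_iff, Set.mem_ofPred_eq,
    Set.mem_empty_iff_false, iff_false]
  rintro ⟨hwalk, rfl, -⟩
  exact hwalk

section Endpoints

variable {D : GraphDB Label Value} {p : List Label} {e f : D.V} {wk : List D.V}

lemma length_eq_of_mem_plainWalksBetween (hwk : wk ∈ D.plainWalksBetween p e f) :
    wk.length = p.length := by
  rw [← hwk.2.1, List.length_map]

lemma cons_tail_of_mem_plainWalksBetween (hwk : wk ∈ D.plainWalksBetween p e f) :
    e :: wk.tail = wk :=
  List.cons_head?_tail hwk.2.2.1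

lemma dropLast_append_of_mem_plainWalksBetween (hwk : wk ∈ D.plainWalksBetween p e f) :
    wk.dropLast ++ [f] = wk :=
  List.dropLast_append_getLast? f hwk.2.2.2

end Endpoints

lemma append_cons_mem_plainWalksBetween_iff (D : GraphDB Label Value)
    {p p' : List Label} {q : Label} {l₁ l₂ : List D.V} {x e f : D.V}
    (hlen : l₁.length = p.length) :
    l₁ ++ x :: l₂ ∈ D.plainWalksBetween (p ++ q :: p') e f ↔
      l₁ ++ [x] ∈ D.plainWalksBetween (p ++ [q]) e x ∧
        x :: l₂ ∈ D.plainWalksBetween (q :: p') x f := by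
  have hmap : l₁.map D.lab ++ D.lab x :: l₂.map D.lab = p ++ q :: p' ↔
      l₁.map D.lab = p ∧ D.lab x = q ∧ l₂.map D.lab = p' := by
    constructor
    · intro h
      obtain ⟨h₁, h₂⟩ := List.append_inj h (by simpa using hlen)
      simp_all
    · rintro ⟨rfl, rfl, rfl⟩
      rfl
  rw [plainWalksBetween, Set.mem_ofPred_eq, isWalk_append_cons_iff]
  simp only [plainWalksBetween, Set.mem_ofPred_eq, List.map_append, List.map_cons, List.map_nil,
    hmap, List.append_singleton_inj, List.cons.injEq, List.head?_append, List.head?_cons,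
    List.getLast?_append, List.getLast?_cons, Option.or_some, Option.some_or, true_and]
  tauto

lemma plainWalksBetween_append_cons_eq_image (D : GraphDB Label Value)
    (p p' : List Label) (q : Label) (e f : D.V)
    (hret : ∀ (g : D.V) (wk : List D.V), wk ∈ D.plainWalksBetween (p ++ [q]) e g → g = e) :
    D.plainWalksBetween (p ++ q :: p') e f =
      (fun w : List D.V × List D.V => w.1.dropLast ++ w.2) ''
        (D.plainWalksBetween (p ++ [q]) e e ×ˢ D.plainWalksBetween (q :: p') e f) := by
  ext wk
  constructor
  · intro hwk
    obtain ⟨l₁, l, rfl, hl₁, hl⟩ := List.map_eq_append_iff.mp hwk.2.1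
    obtain ⟨x, l₂, rfl, -, -⟩ := List.map_eq_cons_iff.mp hl
    have hlen : l₁.length = p.length := by rw [← hl₁, List.length_map]
    obtain ⟨hw₁, hw₂⟩ := (append_cons_mem_plainWalksBetween_iff D hlen).mp hwk
    obtain rfl := hret x _ hw₁
    exact ⟨(l₁ ++ [x], x :: l₂), ⟨hw₁, hw₂⟩, by simp⟩
  · rintro ⟨⟨w₁, w₂⟩, ⟨hw₁, hw₂⟩, rfl⟩
    dsimp only at hw₁ hw₂ ⊢
    have hlen : w₁.dropLast.length = p.length := by
      simp [List.length_dropLast, length_eq_of_mem_plainWalksBetween hw₁]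
    rw [← cons_tail_of_mem_plainWalksBetween hw₂,
      append_cons_mem_plainWalksBetween_iff D hlen, dropLast_append_of_mem_plainWalksBetween hw₁,
      cons_tail_of_mem_plainWalksBetween hw₂]
    exact ⟨hw₁, hw₂⟩

lemma injOn_dropLast_append (D : GraphDB Label Value) (p p' : List Label) (q : Label)
    (e f : D.V) :
    Set.InjOn (fun w : List D.V × List D.V => w.1.dropLast ++ w.2)
      (D.plainWalksBetween (p ++ [q]) e e ×ˢ D.plainWalksBetween (q :: p') e f) := by
  rintro ⟨w₁, w₂⟩ ⟨hw₁, -⟩ ⟨w₁', w₂'⟩ ⟨hw₁', -⟩ h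
  dsimp only at hw₁ hw₁' h
  have hlen : w₁.dropLast.length = w₁'.dropLast.length := by
    simp [List.length_dropLast, length_eq_of_mem_plainWalksBetween hw₁,
      length_eq_of_mem_plainWalksBetween hw₁']
  obtain ⟨hdrop, rfl⟩ := List.append_inj h hlen
  have : w₁ = w₁' := by
    rw [← dropLast_append_of_mem_plainWalksBetween hw₁, hdrop,
      dropLast_append_of_mem_plainWalksBetween hw₁']
  rw [this]

theorem ncard_plainWalksBetween_append_tail (D : GraphDB Label Value) (P Q : List Label)
    (hjoin : Q.head? = P.getLast?) (e f : D.V)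
    (hret : ∀ (g : D.V) (wk : List D.V), wk ∈ D.plainWalksBetween P e g → g = e) :
    (D.plainWalksBetween (P ++ Q.tail) e f).ncard =
      (D.plainWalksBetween P e e).ncard * (D.plainWalksBetween Q e f).ncard := by
  rcases Q with _ | ⟨q, p'⟩
  · obtain rfl : P = [] := List.getLast?_eq_none_iff.mp hjoin.symm
    simp [plainWalksBetween_nil]
  · obtain ⟨p, rfl⟩ := List.getLast?_eq_some_iff.mp hjoin.symm
    rw [List.tail_cons, List.append_assoc, List.singleton_append,
      plainWalksBetween_append_cons_eq_image D p p' q e f hret,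
      (injOn_dropLast_append D p p' q e f).ncard_image, Set.ncard_prod]

lemma getLast?_reverse_append_tail {α : Type*} (s : List α) :
    (s.reverse ++ s.tail).getLast? = s.getLast? := by
  cases s <;> simp [List.getLast?_append, List.getLast?_cons]

theorem star_concat_count_general (D : GraphDB Label Value) (s r : List Label)
    (hjoin : r.head? = s.getLast?)
    (e f : D.V)
    (hret : ∀ (e' : D.V) (wk : List D.V),
        wk ∈ D.plainWalksBetween (s.reverse ++ s.tail) e e' → e' = e) :
    (D.plainWalksBetween (s.reverse ++ s.tail ++ r.tail) e f).ncard =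
      (D.plainWalksBetween (s.reverse ++ s.tail) e e).ncard *
        (D.plainWalksBetween r e f).ncard :=
  D.ncard_plainWalksBetween_append_tail _ r
    (hjoin.trans (getLast?_reverse_append_tail s).symm) e f hret

/-- Counting walks of the concatenation `s⁻¹ · s · r` from `e`
to `f`: provided every walk of `s⁻¹ · s` from `e` returns to `e` (which the
FDs `l_k → l_{k-1}, …, l_2 → l1` force), the count factors as
`|s⁻¹·s(e,e,D)| · |r(e,f,D)|`. -/
theorem star_concat_count (D : GraphDB Label Value) (s r : List Label)
    (hsymm : ∀ x y : D.V, D.E x y → D.E y x)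
    (hFD : ∀ pr ∈ pairsOf s, FD2 D pr.2 pr.1)
    (hjoin : r.head? = s.getLast?)
    (e f : D.V)
    (hret : ∀ (e' : D.V) (wk : List D.V),
        wk ∈ D.plainWalksBetween (s.reverse ++ s.tail) e e' → e' = e) :
    (D.plainWalksBetween (s.reverse ++ s.tail ++ r.tail) e f).ncard =
      (D.plainWalksBetween (s.reverse ++ s.tail) e e).ncard *
        (D.plainWalksBetween r e f).ncard :=
  star_concat_count_general D s r hjoin e f hret

end GraphDB
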